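/- Let n ∈ ℕ, m > 0, λ ∈ [1/3,1], K > 0 with K ≥ √(b_λ Rⁿ), T > 0, and let B ∈ C¹([0,T)) be positive and nonincreasing with B(t) ∈ (0,1), B(t) ≤ K²/(4(a_λ + b_λ)²), and K√(B(t)) < Rⁿ for all t ∈ [0,T). Set σ := (m/ω_n)·a_λ/(K² + a_λ Rⁿ). Then A(t)φ′(ξ)/B(t) ≥ σ, and consequently (A(t)φ′(ξ)/B(t))^{−k} ≤ σ^{−k} for every k ≥ 0, for all t ∈ (0,T) and all s ∈ (B(t), K√(B(t))), where ξ := s/B(t). -/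

import Mathlib

/-!
For `ξ ≥ 1` one has `φ'(ξ) = a_λ/(ξ - b_λ)²`, and the numerator of `A` is the square
`(K - b_λ√B)²`, so `A φ'(ξ)/B = σ ρ` with
`ρ = (K² + a_λRⁿ)/N · ((K - b_λ√B)/((ξ - b_λ)√B))²`.
Both factors of `ρ` are at least `1`: since `2(a_λ + b_λ) = λ + 1`, the bound on `B` says
`(λ + 1)√B ≤ K`, which gives `0 < N ≤ K² + a_λRⁿ`; and `s < K√B` says `ξ√B < K`.
The negative powers are then compared by monotonicity of `x ↦ x^(-k)`; when `σ = 0`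
(that is, `λ = 1`) the quotient `σ ρ` vanishes as well.
-/

open Real Set

/-- `a_λ := (1-λ)²/(2λ)`. -/
noncomputable def aL (l : ℝ) : ℝ := (1 - l) ^ 2 / (2 * l)

/-- `b_λ := (3λ-1)/(2λ)`. -/
noncomputable def bL (l : ℝ) : ℝ := (3 * l - 1) / (2 * l)

/-- `ω_n`, the `(n-1)`-dimensional measure of the unit sphere in `ℝⁿ`,
equals `n` times the volume of the unit ball. -/
noncomputable def omegaN (n : ℕ) : ℝ :=
  (n : ℝ) * (MeasureTheory.volume (Metric.ball (0 : EuclideanSpace ℝ (Fin n)) 1)).toReal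

/-- The comparison profile `φ`. -/
noncomputable def phi (l d ξ : ℝ) : ℝ :=
  if ξ < 1 then (2 * l / (d * Real.exp d)) * (Real.exp (d * ξ) - 1)
  else 1 - aL l / (ξ - bL l)

/-- The derivative `φ'`. -/
noncomputable def phiD (l d ξ : ℝ) : ℝ :=
  if ξ < 1 then 2 * l * Real.exp (d * (ξ - 1)) else aL l / (ξ - bL l) ^ 2

/-- The second derivative `φ''`. -/
noncomputable def phiDD (l d ξ : ℝ) : ℝ :=
  if ξ < 1 then 2 * d * l * Real.exp (d * (ξ - 1)) else -2 * aL l / (ξ - bL l) ^ 3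

/-- `N(t)`. -/
noncomputable def Nf (l R K : ℝ) (n : ℕ) (B : ℝ → ℝ) (t : ℝ) : ℝ :=
  K ^ 2 + aL l * R ^ n - (aL l + bL l) * (2 * K * Real.sqrt (B t) - bL l * B t)

/-- `A(t)`. -/
noncomputable def Af (m ωn l R K : ℝ) (n : ℕ) (B : ℝ → ℝ) (t : ℝ) : ℝ :=
  (m / ωn) * (K ^ 2 - 2 * bL l * K * Real.sqrt (B t) + (bL l) ^ 2 * B t) / Nf l R K n B t

/-- `D(t)`. -/
noncomputable def Df (m ωn l R K : ℝ) (n : ℕ) (B : ℝ → ℝ) (t : ℝ) : ℝ :=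
  (m / ωn) * aL l / Nf l R K n B t

/-- `E(t) := m/ω_n - Rⁿ D(t)`. -/
noncomputable def Ef (m ωn l R K : ℝ) (n : ℕ) (B : ℝ → ℝ) (t : ℝ) : ℝ :=
  m / ωn - R ^ n * Df m ωn l R K n B t

/-- `A_T := (m/ω_n)·1/(1 + a_λ Rⁿ/K²)`. -/
noncomputable def AT (m ωn l R K : ℝ) (n : ℕ) : ℝ :=
  (m / ωn) * (1 / (1 + aL l * R ^ n / K ^ 2))

/-- The parabolic operator `𝒫`. -/
noncomputable def Pop (n : ℕ) (χ p q μ : ℝ) (w : ℝ → ℝ → ℝ) (s t : ℝ) : ℝ :=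
  deriv (fun τ => w s τ) t
    - (n : ℝ) ^ (p + 1) * (s ^ (2 - 2 / (n : ℝ)) * (deriv (fun σ => w σ t) s) ^ p
        * deriv (deriv (fun σ => w σ t)) s)
      / Real.sqrt ((deriv (fun σ => w σ t) s) ^ 2
        + (n : ℝ) ^ 2 * s ^ (2 - 2 / (n : ℝ)) * (deriv (deriv (fun σ => w σ t)) s) ^ 2)
    - (n : ℝ) ^ q * χ * ((w s t - (μ / (n : ℝ)) * s) * (deriv (fun σ => w σ t) s) ^ q)
      / Real.sqrt (1 + s ^ (2 / (n : ℝ) - 2) * (w s t - (μ / (n : ℝ)) * s) ^ 2)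

/-- `J₁(s,t)`. -/
noncomputable def J1 (n : ℕ) (p m ωn l R K d : ℝ) (B : ℝ → ℝ) (s t : ℝ) : ℝ :=
  -(n : ℝ) ^ (p + 1) * ((s / B t) ^ (2 - 2 / (n : ℝ)) * phiDD l d (s / B t))
    / Real.sqrt ((B t) ^ (4 / (n : ℝ) - 2) * (phiD l d (s / B t)) ^ 2
        + (n : ℝ) ^ 2 * (B t) ^ (2 / (n : ℝ) - 2) * (s / B t) ^ (2 - 2 / (n : ℝ))
          * (phiDD l d (s / B t)) ^ 2)
    * (Af m ωn l R K n B t * phiD l d (s / B t) / B t) ^ (p - 1)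

/-- `J₂(s,t)`. -/
noncomputable def J2 (n : ℕ) (q χ m ωn l R K d μ : ℝ) (B : ℝ → ℝ) (s t : ℝ) : ℝ :=
  -(n : ℝ) ^ q * χ
      * (Af m ωn l R K n B t * phi l d (s / B t) - (μ / (n : ℝ)) * B t * (s / B t))
    / Real.sqrt (1 + (B t) ^ (2 / (n : ℝ) - 2) * (s / B t) ^ (2 / (n : ℝ) - 2)
        * (Af m ωn l R K n B t * phi l d (s / B t) - (μ / (n : ℝ)) * B t * (s / B t)) ^ 2)
    * (Af m ωn l R K n B t * phiD l d (s / B t) / B t) ^ (q - 1)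


lemma aL_nonneg {l : ℝ} (hl : 0 ≤ l) : 0 ≤ aL l :=
  div_nonneg (sq_nonneg _) (by linarith)

lemma bL_nonneg {l : ℝ} (hl : 1 / 3 ≤ l) : 0 ≤ bL l :=
  div_nonneg (by linarith) (by linarith)

lemma bL_le_one {l : ℝ} (hl₀ : 0 < l) (hl₁ : l ≤ 1) : bL l ≤ 1 := by
  rw [bL, div_le_one (by linarith)]
  linarith

lemma aL_add_bL {l : ℝ} (hl : l ≠ 0) : aL l + bL l = (l + 1) / 2 := by
  rw [aL, bL]
  field_simp
  ring

lemma omegaN_nonneg (n : ℕ) : 0 ≤ omegaN n :=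
  mul_nonneg n.cast_nonneg ENNReal.toReal_nonneg

lemma phiD_of_one_le {l d ξ : ℝ} (hξ : 1 ≤ ξ) : phiD l d ξ = aL l / (ξ - bL l) ^ 2 := by
  rw [phiD, if_neg hξ.not_gt]

section Nf

variable {l R K : ℝ} {n : ℕ} {B : ℝ → ℝ} {t : ℝ}

lemma add_one_mul_sqrt_le (hl : l ∈ Icc (1 / 3 : ℝ) 1) (hK : 0 ≤ K)
    (hB : B t ≤ K ^ 2 / (4 * (aL l + bL l) ^ 2)) : (l + 1) * √(B t) ≤ K := by
  have hl₀ : l ≠ 0 := by linarith [hl.1]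
  have hl₁ : 0 < l + 1 := by linarith [hl.1]
  have hKl : K ^ 2 / (4 * (aL l + bL l) ^ 2) = (K / (l + 1)) ^ 2 := by
    rw [aL_add_bL hl₀]
    field_simp
    ring
  have hq : √(B t) ≤ K / (l + 1) := Real.sqrt_le_iff.2 ⟨by positivity, hKl ▸ hB⟩
  rwa [le_div_iff₀ hl₁, mul_comm] at hq

lemma Nf_pos (hl : l ∈ Icc (1 / 3 : ℝ) 1) (hR : 0 < R) (hK : 0 ≤ K) (hB : 0 < B t)
    (hKB : (l + 1) * √(B t) ≤ K) : 0 < Nf l R K n B t := by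
  have hl₀ : 0 < l := by linarith [hl.1]
  have ha := aL_nonneg hl₀.le
  have hb := bL_nonneg hl.1
  have hRn : 0 < R ^ n := pow_pos hR n
  have hsum : 0 < aL l * R ^ n + (aL l + bL l) * bL l * B t := by
    rcases ha.eq_or_lt with ha₀ | ha₀
    · have hb₀ : 0 < bL l := by linarith [aL_add_bL hl₀.ne']
      rw [← ha₀]
      positivity
    · have := mul_nonneg (mul_nonneg (add_nonneg ha hb) hb) hB.le
      nlinarith [mul_pos ha₀ hRn]
  have hKq : K * ((l + 1) * √(B t)) ≤ K ^ 2 := by nlinarith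
  rw [Nf]
  nlinarith [aL_add_bL hl₀.ne']

lemma Nf_le (hl : l ∈ Icc (1 / 3 : ℝ) 1) (hB : 0 ≤ B t) (hKB : √(B t) ≤ K) :
    Nf l R K n B t ≤ K ^ 2 + aL l * R ^ n := by
  have hl₀ : 0 < l := by linarith [hl.1]
  have hq := Real.sq_sqrt hB
  have hbB : bL l * B t ≤ 2 * K * √(B t) := by
    nlinarith [bL_nonneg hl.1, bL_le_one hl₀ hl.2, Real.sqrt_nonneg (B t)]
  rw [Nf]
  nlinarith [aL_nonneg hl₀.le, bL_nonneg hl.1]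

lemma Af_mul_phiD_div_eq (m ωn d ξ : ℝ) (hB : 0 < B t) (hξ : 1 ≤ ξ) (hξb : ξ - bL l ≠ 0)
    (hN : Nf l R K n B t ≠ 0) (hden : K ^ 2 + aL l * R ^ n ≠ 0) :
    Af m ωn l R K n B t * phiD l d ξ / B t
      = (m / ωn) * aL l / (K ^ 2 + aL l * R ^ n)
        * ((K ^ 2 + aL l * R ^ n) / Nf l R K n B t
          * ((K - bL l * √(B t)) / ((ξ - bL l) * √(B t))) ^ 2) := by
  have hq := Real.sq_sqrt hB.le
  have hq₀ : √(B t) ≠ 0 := (Real.sqrt_pos.2 hB).ne'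
  have hnum : K ^ 2 - 2 * bL l * K * √(B t) + bL l ^ 2 * B t = (K - bL l * √(B t)) ^ 2 := by
    linear_combination (-bL l ^ 2) * hq
  rw [Af, hnum, phiD_of_one_le hξ, div_pow, mul_pow, hq]
  field_simp

end Nf

lemma le_mul_and_rpow_neg_mul_le {σ ρ : ℝ} (hσ : 0 ≤ σ) (hρ : 1 ≤ ρ) :
    σ ≤ σ * ρ ∧ ∀ k : ℝ, 0 ≤ k → (σ * ρ) ^ (-k) ≤ σ ^ (-k) := by
  have hle : σ ≤ σ * ρ := le_mul_of_one_le_right hσ hρ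
  refine ⟨hle, fun k hk => ?_⟩
  rcases hσ.eq_or_lt with rfl | hσ₀
  · simp
  · exact Real.rpow_le_rpow_of_nonpos hσ₀ hle (neg_nonpos.2 hk)

theorem stmt16_general (n : ℕ) (R m l K T d : ℝ) (hR : 0 < R) (hm : 0 < m)
    (hl : l ∈ Set.Icc (1/3 : ℝ) 1) (hK : 0 < K)
    (B : ℝ → ℝ)
    (hBpos : ∀ t ∈ Set.Ico (0 : ℝ) T, B t ∈ Set.Ioo (0 : ℝ) 1)
    (hBle : ∀ t ∈ Set.Ico (0 : ℝ) T, B t ≤ K ^ 2 / (4 * (aL l + bL l) ^ 2)) :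
    ∀ t ∈ Set.Ioo (0 : ℝ) T, ∀ s ∈ Set.Ioo (B t) (K * Real.sqrt (B t)),
      (m / omegaN n) * aL l / (K ^ 2 + aL l * R ^ n)
          ≤ Af m (omegaN n) l R K n B t * phiD l d (s / B t) / B t ∧
      ∀ k : ℝ, 0 ≤ k →
        (Af m (omegaN n) l R K n B t * phiD l d (s / B t) / B t) ^ (-k)
          ≤ ((m / omegaN n) * aL l / (K ^ 2 + aL l * R ^ n)) ^ (-k) := by
  intro t ht s hs
  have htT : t ∈ Ico 0 T := Ioo_subset_Ico_self ht
  have hB : 0 < B t := (hBpos t htT).1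
  have hq : 0 < √(B t) := Real.sqrt_pos.2 hB
  have ha : 0 ≤ aL l := aL_nonneg (by linarith [hl.1])
  have hden : 0 < K ^ 2 + aL l * R ^ n :=
    add_pos_of_pos_of_nonneg (pow_pos hK 2) (mul_nonneg ha (pow_pos hR n).le)
  have hKB : (l + 1) * √(B t) ≤ K := add_one_mul_sqrt_le hl hK.le (hBle t htT)
  have hN : 0 < Nf l R K n B t := Nf_pos hl hR hK.le hB hKB
  have hξ : 1 < s / B t := (one_lt_div hB).2 hs.1
  have hξb : 0 < s / B t - bL l := by linarith [bL_le_one (by linarith [hl.1]) hl.2]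
  have hξK : (s / B t - bL l) * √(B t) ≤ K - bL l * √(B t) := by
    have : s / B t * √(B t) < K := by
      rw [div_mul_eq_mul_div, div_lt_iff₀ hB]
      nlinarith [Real.sq_sqrt hB.le, mul_lt_mul_of_pos_right hs.2 hq]
    linarith
  have hρ : 1 ≤ (K ^ 2 + aL l * R ^ n) / Nf l R K n B t
      * ((K - bL l * √(B t)) / ((s / B t - bL l) * √(B t))) ^ 2 :=
    one_le_mul_of_one_le_of_one_le
      ((one_le_div hN).2 (Nf_le hl hB.le (by nlinarith [hl.1])))
      (one_le_pow₀ ((one_le_div (mul_pos hξb hq)).2 hξK))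
  rw [Af_mul_phiD_div_eq m (omegaN n) d _ hB hξ.le hξb.ne' hN.ne' hden.ne']
  exact le_mul_and_rpow_neg_mul_le
    (div_nonneg (mul_nonneg (div_nonneg hm.le (omegaN_nonneg n)) ha) hden.le) hρ

/-- With `σ := (m/ω_n)·a_λ/(K² + a_λ Rⁿ)`, one has
`A(t)φ'(ξ)/B(t) ≥ σ` and hence `(A(t)φ'(ξ)/B(t))^{−k} ≤ σ^{−k}` for every `k ≥ 0`,
for `t ∈ (0,T)` and `s ∈ (B(t), K√B(t))`, `ξ = s/B(t)`. -/
theorem stmt16 (n : ℕ) (hn : 0 < n) (R m l K T d : ℝ) (hR : 0 < R) (hm : 0 < m)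
    (hl : l ∈ Set.Icc (1/3 : ℝ) 1) (hK : 0 < K) (hKb : Real.sqrt (bL l * R ^ n) ≤ K)
    (hT : 0 < T)
    (hd : d ∈ Set.Ioo (1 : ℝ) 2) (hde : (2 - d) * Real.exp d - 2 = 0)
    (B B' : ℝ → ℝ)
    (hB : ∀ t ∈ Set.Ico (0 : ℝ) T, HasDerivAt B (B' t) t)
    (hB'c : ContinuousOn B' (Set.Ico 0 T))
    (hBpos : ∀ t ∈ Set.Ico (0 : ℝ) T, B t ∈ Set.Ioo (0 : ℝ) 1)
    (hBanti : AntitoneOn B (Set.Ico 0 T))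
    (hBle : ∀ t ∈ Set.Ico (0 : ℝ) T, B t ≤ K ^ 2 / (4 * (aL l + bL l) ^ 2))
    (hBR : ∀ t ∈ Set.Ico (0 : ℝ) T, K * Real.sqrt (B t) < R ^ n) :
    ∀ t ∈ Set.Ioo (0 : ℝ) T, ∀ s ∈ Set.Ioo (B t) (K * Real.sqrt (B t)),
      (m / omegaN n) * aL l / (K ^ 2 + aL l * R ^ n)
          ≤ Af m (omegaN n) l R K n B t * phiD l d (s / B t) / B t ∧
      ∀ k : ℝ, 0 ≤ k →
        (Af m (omegaN n) l R K n B t * phiD l d (s / B t) / B t) ^ (-k)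
          ≤ ((m / omegaN n) * aL l / (K ^ 2 + aL l * R ^ n)) ^ (-k) :=
  stmt16_general n R m l K T d hR hm hl hK B hBpos hBle
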